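/- Let n be a nonsquare positive integer, and let (k_0, m_0, k_1), (k_1, m_1, k_2), …, (k_N, m_N, k_{N+1}) be a finite chain of steps such that k_0 = 1, k_{N+1} = 1, for every 1 ≤ i ≤ N, k_i divides m_{i−1} + m_i, and every m_i (0 ≤ i ≤ N) is strictly best mod k_i. Then the chain is palindromic: k_i = k_{N+1−i} for all 0 ≤ i ≤ N+1, and m_i = m_{N−i} for all 0 ≤ i ≤ N. -/

import Mathlib

/-- `m` is a best representative of its congruence class mod `k`. -/
def IsBest (n k m : ℤ) : Prop :=
  ∀ m' : ℤ, 0 < m' → m' ≡ m [ZMOD k] → |m ^ 2 - n| ≤ |m' ^ 2 - n|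

/-- `m` is a strictly best representative of its congruence class mod `k`. -/
def IsStrictBest (n k m : ℤ) : Prop :=
  ∀ m' : ℤ, 0 < m' → m' ≡ m [ZMOD k] → m' ≠ m → |m ^ 2 - n| < |m' ^ 2 - n|

/-- `(k, m, k')` is a step. -/
def IsStep (n k m k' : ℤ) : Prop :=
  0 < k ∧ 0 < m ∧ 0 < k' ∧ k ^ 2 < n ∧ |m ^ 2 - n| = k * k' ∧ IsBest n k m

/-!
For `0 < q` with `q² < n`, a positive `x` is best mod `q` exactly when
`|2 (x² - n) + q²| ≤ 2 q x`. When `|x² - n| = q r` this condition is equivalent to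
`|(x² - n) + 2 r²| ≤ 2 r x`, and feeding this through two consecutive steps linked by
`k' ∣ m + m'` shows that each `m_i` is also best mod `k_{i+1}`, so the reversed chain
is again a chain of steps. Since `m_i` is the unique best representative of its class
mod `k_i`, comparing the chain with its reversal from the end `k_0 = k_{N+1} = 1`
inwards forces `m_i = m_{N-i}` and `k_{i+1} = k_{N-i}`.
-/

lemma abs_sub_le_abs_sub_of_two_mul_le_add {α : Type*} [CommRing α] [LinearOrder α]
    [IsStrictOrderedRing α] {a b c n : α} (hab : a ≤ b) (hbc : b ≤ c)
    (h : 2 * n ≤ a + b) : |a - n| ≤ |c - n| :=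
  (abs_le.2 ⟨by linarith, by linarith⟩).trans (le_abs_self _)

lemma isBest_of_abs_le {n q x : ℤ} (hq : 0 < q) (h : |2 * (x ^ 2 - n) + q ^ 2| ≤ 2 * q * x) :
    IsBest n q x := by
  obtain ⟨hlo, hhi⟩ := abs_le.1 h
  have hx : 0 ≤ x := by nlinarith [abs_nonneg (2 * (x ^ 2 - n) + q ^ 2)]
  intro y hy hyx
  obtain ⟨s, hs⟩ := Int.modEq_iff_dvd.1 hyx.symm
  rcases lt_trichotomy s 0 with hs0 | rfl | hs0
  · have hyq : y ≤ x - q := by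
      nlinarith [mul_le_mul_of_nonneg_left (show s ≤ -1 by omega) hq.le]
    have := abs_sub_le_abs_sub_of_two_mul_le_add (a := -x ^ 2) (b := -(x - q) ^ 2) (c := -y ^ 2)
      (n := -n) (by nlinarith) (by nlinarith) (by linarith)
    simpa only [neg_sub_neg, abs_sub_comm] using this
  · rw [show y = x by linarith]
  · have hyq : x + q ≤ y := by
      nlinarith [mul_le_mul_of_nonneg_left (show 1 ≤ s by omega) hq.le]
    exact abs_sub_le_abs_sub_of_two_mul_le_add (b := (x + q) ^ 2) (by nlinarith) (by nlinarith)
      (by linarith)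

lemma IsBest.abs_le {n q x : ℤ} (hb : IsBest n q x) (hq : 0 < q) (hqn : q ^ 2 < n)
    (hx : 0 < x) :
    |2 * (x ^ 2 - n) + q ^ 2| ≤ 2 * q * x := by
  refine _root_.abs_le.2 ⟨?_, ?_⟩
  · have := hb (x + q) (by linarith) (Int.modEq_iff_dvd.2 ⟨-1, by ring⟩)
    cases abs_cases (x ^ 2 - n) <;> cases abs_cases ((x + q) ^ 2 - n) <;> nlinarith
  · rcases le_or_gt x q with hxq | hxq
    · nlinarith [mul_nonneg (sub_nonneg.2 hxq) hx.le]
    have := hb (x - q) (by linarith) (Int.modEq_iff_dvd.2 ⟨1, by ring⟩)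
    cases abs_cases (x ^ 2 - n) <;> cases abs_cases ((x - q) ^ 2 - n) <;> nlinarith

lemma IsBest.of_dvd {n q q' x : ℤ} (hb : IsBest n q x) (hqq' : q ∣ q') : IsBest n q' x :=
  fun y hy hyx => hb y hy (hyx.of_dvd hqq')

lemma abs_mul_le_two_mul_mul_iff {α : Type*} [CommRing α] [LinearOrder α]
    [IsStrictOrderedRing α] {a b c : α} (ha : 0 < a) :
    |a * b| ≤ 2 * a * c ↔ |b| ≤ 2 * c := by
  rw [abs_mul, abs_of_pos ha, mul_right_comm, mul_comm _ a, mul_le_mul_iff_right₀ ha]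

lemma abs_two_mul_add_sq_le_iff {d q r x : ℤ} (hq : 0 < q) (hr : 0 < r) (hd : |d| = q * r) :
    |2 * d + q ^ 2| ≤ 2 * q * x ↔ |d + 2 * r ^ 2| ≤ 2 * r * x := by
  rcases abs_eq_abs.1 (hd.trans (abs_of_pos (mul_pos hq hr)).symm) with rfl | rfl
  · rw [show 2 * (q * r) + q ^ 2 = q * (2 * r + q) by ring, abs_mul_le_two_mul_mul_iff hq,
      show q * r + 2 * r ^ 2 = r * (2 * r + q) by ring, abs_mul_le_two_mul_mul_iff hr]
  · rw [show 2 * -(q * r) + q ^ 2 = q * -(2 * r - q) by ring, abs_mul_le_two_mul_mul_iff hq,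
      show -(q * r) + 2 * r ^ 2 = r * (2 * r - q) by ring, abs_mul_le_two_mul_mul_iff hr, abs_neg]

/- The inequality behind `IsStep.isBest_of_dvd_add`, divided by `a = k'`:
`d = (m² - n) / a`, `e = (m'² - n) / a` and `t = (m + m') / a`. -/
lemma abs_add_two_mul_le_two_mul {a m m' t d e : ℤ} (ha : 0 < a) (hm : 0 < m) (hm' : 0 < m')
    (ht : m + m' = a * t) (hde : d - e = t * (m - m'))
    (hA : |d + 2 * a| ≤ 2 * m) (hB : |2 * e + a| ≤ 2 * m') : |e + 2 * a| ≤ 2 * m' := by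
  obtain ⟨hA₁, hA₂⟩ := abs_le.1 hA
  obtain ⟨hB₁, hB₂⟩ := abs_le.1 hB
  have ht₁ : 1 ≤ t := by nlinarith
  refine abs_le.2 ⟨by linarith, ?_⟩
  rcases lt_trichotomy t 2 with ht₂ | rfl | ht₂
  · obtain rfl : t = 1 := by omega
    linarith
  · linarith
  · rcases le_or_gt m m' with hmm' | hmm'
    · nlinarith
    · nlinarith

lemma IsStep.isBest_of_dvd_add {n k m k' m' k'' : ℤ} (h : IsStep n k m k')
    (h' : IsStep n k' m' k'') (hdvd : k' ∣ m + m') : IsBest n k'' m' := by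
  obtain ⟨hk, hm, hk', hkn, hD, hb⟩ := h
  obtain ⟨-, hm', hk'', hk'n, hE, hb'⟩ := h'
  have hA := (abs_two_mul_add_sq_le_iff hk hk' hD).1 (hb.abs_le hk hkn hm)
  have hB := hb'.abs_le hk' hk'n hm'
  refine isBest_of_abs_le hk'' <|
    (abs_two_mul_add_sq_le_iff hk'' hk' (hE.trans (mul_comm _ _))).2 ?_
  obtain ⟨t, ht⟩ := hdvd
  obtain ⟨d, hd⟩ := (dvd_abs _ _).1 (⟨k, hD.trans (mul_comm _ _)⟩ : k' ∣ |m ^ 2 - n|)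
  obtain ⟨e, he⟩ := (dvd_abs _ _).1 (⟨k'', hE⟩ : k' ∣ |m' ^ 2 - n|)
  have hde : d - e = t * (m - m') := mul_left_cancel₀ hk'.ne' <| by
    linear_combination he - hd + (m - m') * ht
  rw [hd, show k' * d + 2 * k' ^ 2 = k' * (d + 2 * k') by ring,
    abs_mul_le_two_mul_mul_iff hk'] at hA
  rw [he, show 2 * (k' * e) + k' ^ 2 = k' * (2 * e + k') by ring,
    abs_mul_le_two_mul_mul_iff hk'] at hB
  rw [he, show k' * e + 2 * k' ^ 2 = k' * (e + 2 * k') by ring, abs_mul_le_two_mul_mul_iff hk']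
  exact abs_add_two_mul_le_two_mul hk' hm hm' ht hde hA hB

lemma IsStrictBest.eq_of_isBest {n q x y : ℤ} (hs : IsStrictBest n q x) (hb : IsBest n q y)
    (hx : 0 < x) (hy : 0 < y) (hxy : y ≡ x [ZMOD q]) : y = x := by
  by_contra hne
  exact (hs y hy hxy hne).not_ge (hb x hx hxy.symm)

lemma IsStep.eq_of_isStep {n k m k' l m' : ℤ} (h : IsStep n k m k') (hs : IsStrictBest n k m)
    (h' : IsStep n l m' k) (hb : IsBest n k m') (hmm' : m' ≡ m [ZMOD k]) : m' = m ∧ k' = l := by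
  obtain ⟨hk, hm, -, -, hD, -⟩ := h
  obtain ⟨-, hm', -, -, hD', -⟩ := h'
  have hmm := hs.eq_of_isBest hb hm hm' hmm'
  refine ⟨hmm, mul_left_cancel₀ hk.ne' ?_⟩
  rw [← hD, ← hmm, hD', mul_comm]

section Chain

variable {n : ℤ} {N : ℕ} {k m : ℕ → ℤ}

lemma isBest_succ_of_chain (hchain : ∀ i ≤ N, IsStep n (k i) (m i) (k (i + 1)))
    (hk0 : k 0 = 1) (hdvd : ∀ i < N, k (i + 1) ∣ m i + m (i + 1)) :
    ∀ j ≤ N, IsBest n (k (j + 1)) (m j)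
  | 0, _ => (hk0 ▸ (hchain 0 (Nat.zero_le N)).2.2.2.2.2).of_dvd (one_dvd _)
  | j + 1, hj => (hchain j (by omega)).isBest_of_dvd_add (hchain (j + 1) hj) (hdvd j hj)

lemma chain_mirror (hchain : ∀ i ≤ N, IsStep n (k i) (m i) (k (i + 1)))
    (hk0 : k 0 = 1) (hkN : k (N + 1) = 1) (hdvd : ∀ i < N, k (i + 1) ∣ m i + m (i + 1))
    (hstrict : ∀ i ≤ N, IsStrictBest n (k i) (m i)) (i : ℕ) :
    ∀ j, i + j = N → m j = m i ∧ k (i + 1) = k j := by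
  have hbest := isBest_succ_of_chain hchain hk0 hdvd
  induction i with
  | zero =>
    intro j hj
    obtain rfl : j = N := by omega
    refine (hchain 0 (Nat.zero_le j)).eq_of_isStep (hstrict 0 (Nat.zero_le j)) ?_ ?_ ?_
    · simpa [hkN, hk0] using hchain j le_rfl
    · simpa [hkN, hk0] using hbest j le_rfl
    · simp [hk0, Int.modEq_one]
  | succ i ih =>
    rintro j rfl
    obtain ⟨hmi, hki⟩ := ih (j + 1) (by omega)
    refine (hchain (i + 1) (by omega)).eq_of_isStep (hstrict (i + 1) (by omega)) ?_ ?_ ?_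
    · simpa [hki] using hchain j (by omega)
    · simpa [hki] using hbest j (by omega)
    · have hj : k (i + 1) ∣ m j + m i := by rw [hki, ← hmi]; exact hdvd j (by omega)
      rw [Int.modEq_iff_dvd, show m (i + 1) - m j = m i + m (i + 1) - (m j + m i) by ring]
      exact dvd_sub (hdvd i (by omega)) hj

end Chain

theorem stmt_14_general (n : ℤ)
    (N : ℕ) (k : ℕ → ℤ) (m : ℕ → ℤ)
    (hchain : ∀ i ≤ N, IsStep n (k i) (m i) (k (i + 1)))
    (hk0 : k 0 = 1) (hkN : k (N + 1) = 1)
    (hdvd : ∀ i, 1 ≤ i → i ≤ N → k i ∣ m (i - 1) + m i)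
    (hstrict : ∀ i ≤ N, IsStrictBest n (k i) (m i)) :
    (∀ i ≤ N + 1, k i = k (N + 1 - i)) ∧ (∀ i ≤ N, m i = m (N - i)) := by
  have hmirror := chain_mirror hchain hk0 hkN
    (fun i hi => by simpa using hdvd (i + 1) (by omega) hi) hstrict
  refine ⟨fun i hi => ?_, fun i hi => ((hmirror i (N - i) (by omega)).1).symm⟩
  cases i with
  | zero => rw [hk0, Nat.sub_zero, hkN]
  | succ i => rw [show N + 1 - (i + 1) = N - i by omega]; exact (hmirror i (N - i) (by omega)).2

theorem stmt_14 (n : ℤ) (hn : 0 < n) (hns : ¬ IsSquare n)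
    (N : ℕ) (k : ℕ → ℤ) (m : ℕ → ℤ)
    (hchain : ∀ i ≤ N, IsStep n (k i) (m i) (k (i + 1)))
    (hk0 : k 0 = 1) (hkN : k (N + 1) = 1)
    (hdvd : ∀ i, 1 ≤ i → i ≤ N → k i ∣ m (i - 1) + m i)
    (hstrict : ∀ i ≤ N, IsStrictBest n (k i) (m i)) :
    (∀ i ≤ N + 1, k i = k (N + 1 - i)) ∧ (∀ i ≤ N, m i = m (N - i)) :=
  stmt_14_general n N k m hchain hk0 hkN hdvd hstrict
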